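/- arXiv:1212.5057 — 3 statements merged into one kernel-verified Lean document; each statement's English description precedes it below -/
import Mathlib

section
/- If f(η) = (λ/2) η² - (λ²/(2·5!)) η^5 + Σ_{n≥6} C_n η^n is a formal power series solution of the Blasius equation, then C_6 = C_7 = 0 and C_8 = 11 λ³/(4·8!). -/
/-!
Equating the coefficient of `η^(k+3)` in `f''' + (1/2) f f'' = 0` expresses `C (k+3)` through the
Cauchy product of `f` and `f''` at `η^k`. For `f = C₂ η² + C₅ η⁵ + O(η⁶)` that product vanishes at
`k = 3, 4`, and at `k = 5` only the pairs `(2, 5)` and `(5, 2)` contribute, giving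
`4·5 C₂C₅ + 1·2 C₅C₂ = 22 C₂C₅`; hence `C₈ = -22 C₂C₅ / (2·6·7·8) = 11 λ³ / (4·8!)`.
-/

open Finset

namespace Blasius

variable {K : Type*}

/-- The coefficient of `η^k` in `f f''` for `f = ∑ C n η^n`. -/
def convCoeff [CommRing K] (C : ℕ → K) (k : ℕ) : K :=
  ∑ p ∈ antidiagonal k, C p.1 * (((p.2 : K) + 1) * ((p.2 : K) + 2) * C (p.2 + 2))

theorem coeff_add_three_eq [Field K] [CharZero K] {C : ℕ → K} {k : ℕ}
    (hrec : ((k : K) + 1) * ((k : K) + 2) * ((k : K) + 3) * C (k + 3)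
      + (1 / 2) * convCoeff C k = 0) :
    C (k + 3) = -convCoeff C k / (2 * (((k : K) + 1) * ((k : K) + 2) * ((k : K) + 3))) := by
  have hden : ((k : K) + 1) * ((k : K) + 2) * ((k : K) + 3) ≠ 0 :=
    mul_ne_zero (mul_ne_zero (by exact_mod_cast k.succ_ne_zero)
      (by exact_mod_cast (k + 1).succ_ne_zero)) (by exact_mod_cast (k + 2).succ_ne_zero)
  rw [eq_div_iff (mul_ne_zero two_ne_zero hden)]
  linear_combination 2 * hrec

section QuinticTruncation

variable [CommRing K] {C : ℕ → K}
  (h0 : C 0 = 0) (h1 : C 1 = 0) (h3 : C 3 = 0) (h4 : C 4 = 0)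
include h0 h1 h3

theorem convCoeff_three : convCoeff C 3 = 0 := by
  simp [convCoeff, Nat.sum_antidiagonal_eq_sum_range_succ_mk, sum_range_succ, h0, h1, h3]

include h4

theorem convCoeff_four : convCoeff C 4 = 0 := by
  simp [convCoeff, Nat.sum_antidiagonal_eq_sum_range_succ_mk, sum_range_succ, h0, h1, h3, h4]

theorem convCoeff_five : convCoeff C 5 = 22 * C 2 * C 5 := by
  simp only [convCoeff, Nat.sum_antidiagonal_eq_sum_range_succ_mk, Nat.succ_eq_add_one,
    Nat.reduceAdd, sum_range_succ, range_one, sum_singleton, h0, tsub_zero, Nat.cast_ofNat,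
    zero_mul, h1, Nat.add_one_sub_one, add_zero, Nat.reduceSub, zero_add, h3, h4, mul_zero,
    Nat.cast_one, tsub_self, Nat.cast_zero, one_mul]
  ring

end QuinticTruncation

end Blasius

open Blasius in
/-- For the formal power series solution f(η) = (λ/2)η² - (λ²/(2·5!))η⁵ + Σ_{n≥6} C_n η^n of
the Blasius equation, one has C_6 = C_7 = 0 and C_8 = 11λ³/(4·8!). -/
theorem blasius_series_coefficients_second (C : ℕ → ℝ) (lam : ℝ)
    (h0 : C 0 = 0) (h1 : C 1 = 0) (h2 : C 2 = lam / 2)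
    (h3 : C 3 = 0) (h4 : C 4 = 0) (h5 : C 5 = -lam ^ 2 / (2 * 120))
    (hrec : ∀ k : ℕ,
      ((k : ℝ) + 1) * ((k : ℝ) + 2) * ((k : ℝ) + 3) * C (k + 3)
        + (1 / 2) * ∑ p ∈ Finset.HasAntidiagonal.antidiagonal k,
            C p.1 * (((p.2 : ℝ) + 1) * ((p.2 : ℝ) + 2) * C (p.2 + 2)) = 0) :
    C 6 = 0 ∧ C 7 = 0 ∧ C 8 = 11 * lam ^ 3 / (4 * 40320) := by
  have hC6 := coeff_add_three_eq (hrec 3)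
  have hC7 := coeff_add_three_eq (hrec 4)
  have hC8 := coeff_add_three_eq (hrec 5)
  rw [convCoeff_three h0 h1 h3] at hC6
  rw [convCoeff_four h0 h1 h3 h4] at hC7
  rw [convCoeff_five h0 h1 h3 h4, h2, h5] at hC8
  refine ⟨by simpa using hC6, by simpa using hC7, ?_⟩
  rw [hC8]
  push_cast
  ring
end

section
/- If f solves the Blasius equation on [0,∞) with f(0) = f'(0) = 0 and f''(0) > 0, then f(η) > 0 and f'(η) > 0 for all η > 0, and f'' is strictly decreasing on (0,∞). -/
/-!
Writing `g = f''`, the Blasius equation is the linear equation `g' = -(f/2) g`, so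
`g η = g 0 · exp (-½ ∫₀^η f) > 0` for `η ≥ 0`. Hence `f'` is strictly increasing from `f'(0) = 0`,
so `f' > 0`, and then `f` is strictly increasing from `f(0) = 0`, so `f > 0`. Finally
`g' = -(f/2) g < 0` on `(0, ∞)`.
-/

open Set Real

theorem eq_mul_exp_neg_integral_of_deriv_eq {g a : ℝ → ℝ} {x₀ : ℝ}
    (hg : Differentiable ℝ g) (ha : Continuous a)
    (hode : ∀ x ∈ Ici x₀, deriv g x = -(a x * g x)) :
    ∀ x ∈ Ici x₀, g x = g x₀ * exp (-∫ t in x₀..x, a t) := by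
  set A : ℝ → ℝ := fun x => ∫ t in x₀..x, a t
  have hA : ∀ x, HasDerivAt A (a x) x := fun x =>
    intervalIntegral.integral_hasDerivAt_right (ha.intervalIntegrable _ _)
      ha.aestronglyMeasurable.stronglyMeasurableAtFilter ha.continuousAt
  -- `g · exp A` is an integrating-factor first integral
  have hint : ∀ x, HasDerivAt (fun x => g x * exp (A x))
      (deriv g x * exp (A x) + g x * (exp (A x) * a x)) x := fun x =>
    (hg x).hasDerivAt.mul (hA x).exp
  intro x hx
  have hconst := constant_of_has_deriv_right_zero (f := fun x => g x * exp (A x))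
    (fun y _ => (hint y).continuousAt.continuousWithinAt)
    (fun y hy => by
      convert (hint y).hasDerivWithinAt using 1
      rw [hode y hy.1]
      ring) x ⟨hx, le_rfl⟩
  have hA₀ : A x₀ = 0 := intervalIntegral.integral_same
  calc g x = g x * exp (A x) * exp (-A x) := by
        rw [mul_assoc, ← exp_add, add_neg_cancel, exp_zero, mul_one]
    _ = g x₀ * exp (-A x) := by rw [hconst, hA₀, exp_zero, mul_one]

theorem lt_of_deriv_pos_on_Ioi {u : ℝ → ℝ} {x₀ : ℝ} (hu : ContinuousOn u (Ici x₀))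
    (hu' : ∀ x ∈ Ioi x₀, 0 < deriv u x) : ∀ x ∈ Ioi x₀, u x₀ < u x := fun _ hx =>
  strictMonoOn_of_deriv_pos (convex_Ici x₀) hu (by rwa [interior_Ici]) self_mem_Ici
    (mem_Ici.2 (le_of_lt hx)) hx

/-- If f solves the Blasius equation on [0,∞) with f(0) = f'(0) = 0 and f''(0) > 0, then
f > 0 and f' > 0 on (0,∞), and f'' is strictly decreasing on (0,∞). -/
theorem blasius_positivity (f : ℝ → ℝ)
    (hf : ContDiff ℝ 3 f)
    (hode : ∀ η ∈ Set.Ici (0 : ℝ),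
      deriv (deriv (deriv f)) η + (1 / 2) * f η * deriv (deriv f) η = 0)
    (h0 : f 0 = 0) (h1 : deriv f 0 = 0) (h2 : 0 < deriv (deriv f) 0) :
    (∀ η ∈ Set.Ioi (0 : ℝ), 0 < f η ∧ 0 < deriv f η) ∧
    StrictAntiOn (deriv (deriv f)) (Set.Ioi (0 : ℝ)) := by
  have hdf : Differentiable ℝ f := hf.differentiable (by norm_num)
  have hdf' : Differentiable ℝ (deriv f) := (hf.of_le (by norm_num)).differentiable_deriv_two
  have hdf'' : Differentiable ℝ (deriv (deriv f)) :=
    (hf.iterate_deriv' 1 2).differentiable one_ne_zero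
  have hlin : ∀ η ∈ Ici (0 : ℝ), deriv (deriv (deriv f)) η = -(f η / 2 * deriv (deriv f) η) :=
    fun η hη => by linear_combination hode η hη
  have hf''_pos : ∀ η ∈ Ici (0 : ℝ), 0 < deriv (deriv f) η := fun η hη => by
    rw [eq_mul_exp_neg_integral_of_deriv_eq hdf'' (hdf.continuous.div_const 2) hlin η hη]
    positivity
  have hf'_pos : ∀ η ∈ Ioi (0 : ℝ), 0 < deriv f η := fun η hη => h1 ▸
    lt_of_deriv_pos_on_Ioi hdf'.continuous.continuousOn
      (fun x hx => hf''_pos x (Ioi_subset_Ici_self hx)) η hη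
  have hf_pos : ∀ η ∈ Ioi (0 : ℝ), 0 < f η := fun η hη => h0 ▸
    lt_of_deriv_pos_on_Ioi hdf.continuous.continuousOn hf'_pos η hη
  refine ⟨fun η hη => ⟨hf_pos η hη, hf'_pos η hη⟩, ?_⟩
  refine strictAntiOn_of_deriv_neg (convex_Ioi 0) hdf''.continuous.continuousOn fun x hx => ?_
  rw [interior_Ioi] at hx
  rw [hlin x (Ioi_subset_Ici_self hx), neg_lt_zero]
  exact mul_pos (half_pos (hf_pos x hx)) (hf''_pos x (Ioi_subset_Ici_self hx))
end

section
/- Let f* solve the IVP of the class f''' = φ(η, f, f', f'') in the modified form (problem (12) of the paper) with initial data f*(0) = h*^{1/σ} a, (f*)'(0) = h*^{(1-δ)/σ} b, (f*)''(0) = d, and let λ = ((f*)'(∞)/c)^{1/(1-δ)}. If Γ(h*) = λ^{-σ} h* - 1 = 0, then the rescaled function f(η) = λ^{-1} f*(λ^δ η) satisfies f(0) = a, f'(0) = b, f'(∞) = c, and f''(0) = λ^{2δ-1} d. -/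
/-- ITM for the class f''' = φ(η, f, f', f''): if f* solves the modified IVP with parameter
h* and initial data f*(0) = h*^{1/σ} a, (f*)'(0) = h*^{(1-δ)/σ} b, (f*)''(0) = d, if
(f*)' → L at infinity, λ = (L/c)^{1/(1-δ)}, and Γ(h*) = λ^{-σ} h* - 1 = 0, then the rescaled
function f(η) = λ^{-1} f*(λ^δ η) satisfies f(0) = a, f'(0) = b, f' → c at infinity, and
f''(0) = λ^{2δ-1} d. -/
theorem itm_general_class (φ : ℝ → ℝ → ℝ → ℝ → ℝ) (a b c d δ σ hstar L : ℝ)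
    (hδ : δ ≠ 1) (hσ : σ ≠ 0) (hc : c ≠ 0) (hhstar : 0 < hstar) (hLc : 0 < L / c)
    (fs : ℝ → ℝ) (hfs : ContDiff ℝ 3 fs)
    (hode : ∀ η ∈ Set.Ici (0 : ℝ),
      deriv (deriv (deriv fs)) η
        = hstar ^ ((1 - 3 * δ) / σ) * φ (hstar ^ (-(δ / σ)) * η)
            (hstar ^ (-(1 / σ)) * fs η)
            (hstar ^ ((δ - 1) / σ) * deriv fs η)
            (hstar ^ ((2 * δ - 1) / σ) * deriv (deriv fs) η))
    (h0 : fs 0 = hstar ^ ((1 : ℝ) / σ) * a)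
    (h1 : deriv fs 0 = hstar ^ ((1 - δ) / σ) * b)
    (h2 : deriv (deriv fs) 0 = d)
    (hlim : Filter.Tendsto (deriv fs) Filter.atTop (nhds L))
    (lam : ℝ) (hlamdef : lam = (L / c) ^ ((1 : ℝ) / (1 - δ)))
    (hGamma : lam ^ (-σ) * hstar - 1 = 0)
    (f : ℝ → ℝ) (hfdef : f = fun η => lam⁻¹ * fs (lam ^ δ * η)) :
    f 0 = a ∧ deriv f 0 = b ∧
    Filter.Tendsto (deriv f) Filter.atTop (nhds c) ∧
    deriv (deriv f) 0 = lam ^ (2 * δ - 1) * d := by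
  have hlam_pos : 0 < lam := by
    rw [hlamdef]; exact Real.rpow_pos_of_pos hLc _
  have hlam_ne : lam ≠ 0 := ne_of_gt hlam_pos
  have hL_ne : L ≠ 0 := by
    intro h; rw [h, zero_div] at hLc; exact lt_irrefl 0 hLc
  have hhs : hstar = lam ^ σ := by
    have h := sub_eq_zero.mp hGamma
    have h' : lam ^ σ * (lam ^ (-σ) * hstar) = lam ^ σ * 1 := by rw [h]
    rwa [← mul_assoc, ← Real.rpow_add hlam_pos, add_neg_cancel, Real.rpow_zero,
      one_mul, mul_one] at h'
  have hpow : ∀ t : ℝ, hstar ^ (t / σ) = lam ^ t := by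
    intro t
    rw [hhs, ← Real.rpow_mul hlam_pos.le]
    congr 1; field_simp
  have hlam1δ : lam ^ (1 - δ) = L / c := by
    rw [hlamdef, ← Real.rpow_mul hLc.le]
    rw [one_div_mul_cancel (sub_ne_zero.mpr (Ne.symm hδ)), Real.rpow_one]
  have hm : lam ^ (1 - δ) * lam ^ δ = lam := by
    rw [← Real.rpow_add hlam_pos]; norm_num
  have hdiff : Differentiable ℝ fs := hfs.differentiable (by norm_num)
  have hfs2 : ContDiff ℝ 2 (deriv fs) := by
    have h3 : ContDiff ℝ ((2 : WithTop ℕ∞) + 1) fs := by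
      rw [show ((2 : WithTop ℕ∞) + 1) = 3 from by norm_num]; exact hfs
    exact (contDiff_succ_iff_deriv.mp h3).2.2
  have hdiff2 : Differentiable ℝ (deriv fs) := hfs2.differentiable (by norm_num)
  have hder : ∀ η, HasDerivAt f (lam⁻¹ * (deriv fs (lam ^ δ * η) * lam ^ δ)) η := by
    intro η
    have hinner : HasDerivAt (fun η : ℝ => lam ^ δ * η) (lam ^ δ) η := by
      simpa using (hasDerivAt_id η).const_mul (lam ^ δ)
    have houter : HasDerivAt fs (deriv fs (lam ^ δ * η)) (lam ^ δ * η) :=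
      (hdiff (lam ^ δ * η)).hasDerivAt
    have h := (houter.comp η hinner).const_mul lam⁻¹
    simpa [hfdef, Function.comp] using h
  have hderiv_f : deriv f = fun η => lam⁻¹ * (deriv fs (lam ^ δ * η) * lam ^ δ) := by
    funext η; exact (hder η).deriv
  have hder2 : ∀ η, HasDerivAt (deriv f)
      (lam⁻¹ * (deriv (deriv fs) (lam ^ δ * η) * lam ^ δ * lam ^ δ)) η := by
    intro η
    have hinner : HasDerivAt (fun η : ℝ => lam ^ δ * η) (lam ^ δ) η := by
      simpa using (hasDerivAt_id η).const_mul (lam ^ δ)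
    have houter : HasDerivAt (deriv fs) (deriv (deriv fs) (lam ^ δ * η)) (lam ^ δ * η) :=
      (hdiff2 (lam ^ δ * η)).hasDerivAt
    have h := ((houter.comp η hinner).mul_const (lam ^ δ)).const_mul lam⁻¹
    rw [hderiv_f]
    simpa [Function.comp, mul_comm, mul_assoc, mul_left_comm] using h
  have e1 : hstar ^ ((1 : ℝ) / σ) = lam := by
    have h := hpow 1; rwa [Real.rpow_one] at h
  have e2 : hstar ^ ((1 - δ) / σ) = lam ^ (1 - δ) := hpow (1 - δ)
  refine ⟨?_, ?_, ?_, ?_⟩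
  · simp only [hfdef, mul_zero, h0, e1]
    field_simp
  · rw [hderiv_f]
    simp only [mul_zero, h1, e2]
    field_simp
    linear_combination b * hm
  · have ht : Filter.Tendsto (fun η : ℝ => lam ^ δ * η) Filter.atTop Filter.atTop :=
      Filter.Tendsto.const_mul_atTop (Real.rpow_pos_of_pos hlam_pos δ) Filter.tendsto_id
    have h := ((hlim.comp ht).mul_const (lam ^ δ)).const_mul lam⁻¹
    have hval : lam⁻¹ * (L * lam ^ δ) = c := by
      have hcl : c * lam ^ (1 - δ) = L := by rw [hlam1δ]; field_simp
      field_simp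
      linear_combination c * hm - lam ^ δ * hcl
    rw [hderiv_f]
    rw [hval] at h
    simpa [Function.comp] using h
  · rw [(hder2 0).deriv]
    simp only [mul_zero, h2]
    have hm2 : lam ^ δ * lam ^ δ * lam ^ (-1 : ℝ) = lam ^ (2 * δ - 1) := by
      rw [← Real.rpow_add hlam_pos, ← Real.rpow_add hlam_pos]; ring_nf
    rw [← Real.rpow_neg_one lam]
    linear_combination d * hm2
end
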